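/- arXiv:0704.0976 — 2 statements merged into one kernel-verified Lean document; each statement's English description precedes it below -/
import Mathlib

section
/- Let n ∈ ℕ, let d : Fin n → ℤ be a degree function satisfying Euler's relation ∑ᵢ d i = 6n − 12, and let c : Fin n → Bool be a coloring with r red nodes and b blue nodes (so r + b = n). Then the energy satisfies E(d,c) ≥ |5r + 7b − (6n − 12)|. In particular, if n is even and r = b = n/2, then E(d,c) ≥ 12, so the energy of a colored triangulation of the sphere with equally many red and blue nodes can never be 0. -/
/-- Energy of a colored degree sequence: red nodes (`c i = true`) have target
degree 5, blue nodes (`c i = false`) have target degree 7. -/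
def energy {n : ℕ} (d : Fin n → ℤ) (c : Fin n → Bool) : ℤ :=
  ∑ i, if c i then (d i - 5) ^ 2 else (d i - 7) ^ 2

lemma abs_le_sq_int (a : ℤ) : |a| ≤ a ^ 2 := by
  rcases eq_or_ne a 0 with h | h
  · simp [h]
  · have h1 : 1 ≤ |a| := Int.one_le_abs h
    nlinarith [sq_abs a]

/-- If the degree sequence satisfies Euler's relation `∑ d i = 6n - 12`, then the
energy is at least `|5r + 7b - (6n - 12)|` where `r` and `b` are the numbers of
red and blue nodes.  In particular, with `r = b = n/2` (for even `n`) the energy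
is at least 12, so it can never be 0. -/
theorem energy_lower_bound_euler (n : ℕ) (d : Fin n → ℤ) (c : Fin n → Bool)
    (hEuler : ∑ i, d i = 6 * (n : ℤ) - 12)
    (r b : ℕ)
    (hr : r = (Finset.univ.filter fun i => c i = true).card)
    (hb : b = (Finset.univ.filter fun i => c i = false).card) :
    r + b = n ∧
    energy d c ≥ |5 * (r : ℤ) + 7 * (b : ℤ) - (6 * (n : ℤ) - 12)| ∧
    (Even n → r = n / 2 → b = n / 2 → energy d c ≥ 12) := by
  have hrb : r + b = n := by
    rw [hr, hb]
    have := Finset.card_filter_add_card_filter_not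
      (s := (Finset.univ : Finset (Fin n))) (p := fun i => c i = true)
    simpa using this
  -- sum of targets
  have hsumt : ∑ i, (if c i then (5:ℤ) else 7) = 5 * (r:ℤ) + 7 * (b:ℤ) := by
    rw [Finset.sum_ite, Finset.sum_const, Finset.sum_const, hr, hb]
    simp [Finset.filter_eq_empty_iff]
    ring
  -- key inequality
  have hkey : energy d c ≥ |5 * (r : ℤ) + 7 * (b : ℤ) - (6 * (n : ℤ) - 12)| := by
    have h1 : |5 * (r : ℤ) + 7 * (b : ℤ) - (6 * (n : ℤ) - 12)|
        = |∑ i, ((if c i then (5:ℤ) else 7) - d i)| := by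
      rw [Finset.sum_sub_distrib, hsumt, hEuler]
    rw [h1]
    calc |∑ i, ((if c i then (5:ℤ) else 7) - d i)|
        ≤ ∑ i, |(if c i then (5:ℤ) else 7) - d i| := Finset.abs_sum_le_sum_abs _ _
      _ ≤ energy d c := by
          apply Finset.sum_le_sum
          intro i _
          by_cases h : c i <;> simp only [energy, h, if_true, if_false] <;>
            [ (calc |(5:ℤ) - d i| ≤ ((5:ℤ) - d i)^2 := abs_le_sq_int _
                _ = (d i - 5)^2 := by ring);
              (calc |(7:ℤ) - d i| ≤ ((7:ℤ) - d i)^2 := abs_le_sq_int _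
                _ = (d i - 7)^2 := by ring)]
  refine ⟨hrb, hkey, ?_⟩
  intro hn hrn hbn
  have h12 : 5 * (r : ℤ) + 7 * (b : ℤ) - (6 * (n : ℤ) - 12) = 12 := by
    have hn2 : n = 2 * (n / 2) := (Nat.two_mul_div_two_of_even hn).symm
    have : 5 * r + 7 * b = 6 * n := by omega
    omega
  have := hkey
  rw [h12] at this
  simpa using this
end

section
/- Let n ≥ 8 and let d : Fin n → ℤ be the degree sequence of the christmas-tree triangulation: d takes the value n − 1 at exactly two indices, the value 3 at exactly one index, and the value 4 at the remaining n − 3 indices. Then for every coloring c : Fin n → Bool, the energy satisfies E(d,c) ≥ 2n² − 31n + 129. -/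
/-- The christmas-tree degree sequence (two nodes of degree `n - 1`, one node of
degree 3, and `n - 3` nodes of degree 4) has energy at least `2n² - 31n + 129`
for every coloring, when `n ≥ 8`. -/
theorem christmas_tree_energy (n : ℕ) (hn : 8 ≤ n) (d : Fin n → ℤ)
    (h1 : (Finset.univ.filter fun i => d i = (n : ℤ) - 1).card = 2)
    (h2 : (Finset.univ.filter fun i => d i = 3).card = 1)
    (h3 : (Finset.univ.filter fun i => d i = 4).card = n - 3)
    (c : Fin n → Bool) :
    energy d c ≥ 2 * (n : ℤ) ^ 2 - 31 * (n : ℤ) + 129 := by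
  classical
  set f : Fin n → ℤ := fun i => if c i then (d i - 5) ^ 2 else (d i - 7) ^ 2 with hf
  set A := Finset.univ.filter fun i => d i = (n : ℤ) - 1 with hA
  set B := Finset.univ.filter fun i => d i = 3 with hB
  set C := Finset.univ.filter fun i => d i = 4 with hC
  have hnz : (8 : ℤ) ≤ (n : ℤ) := by exact_mod_cast hn
  have hAB : Disjoint A B := by
    rw [Finset.disjoint_left]
    intro a ha hb
    simp only [hA, hB, Finset.mem_filter] at ha hb
    omega
  have hAC : Disjoint A C := by
    rw [Finset.disjoint_left]
    intro a ha hb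
    simp only [hA, hC, Finset.mem_filter] at ha hb
    omega
  have hBC : Disjoint B C := by
    rw [Finset.disjoint_left]
    intro a ha hb
    simp only [hB, hC, Finset.mem_filter] at ha hb
    omega
  have hABC : Disjoint (A ∪ B) C := by
    rw [Finset.disjoint_union_left]; exact ⟨hAC, hBC⟩
  have hU : A ∪ B ∪ C = Finset.univ := by
    apply Finset.eq_univ_of_card
    rw [Finset.card_union_of_disjoint hABC, Finset.card_union_of_disjoint hAB,
      h1, h2, h3, Fintype.card_fin]
    omega
  have hsplit : energy d c = (∑ i ∈ A, f i) + (∑ i ∈ B, f i) + (∑ i ∈ C, f i) := by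
    rw [← Finset.sum_union hAB, ← Finset.sum_union hABC, hU]
    rfl
  have hAbound : (A.card : ℤ) * ((n : ℤ) - 8) ^ 2 ≤ ∑ i ∈ A, f i := by
    calc (A.card : ℤ) * ((n : ℤ) - 8) ^ 2 = ∑ _i ∈ A, ((n : ℤ) - 8) ^ 2 := by
          rw [Finset.sum_const, nsmul_eq_mul]
      _ ≤ ∑ i ∈ A, f i := by
          apply Finset.sum_le_sum
          intro i hi
          simp only [hA, Finset.mem_filter] at hi
          simp only [hf, hi.2]
          split <;> nlinarith
  have hBbound : (B.card : ℤ) * 4 ≤ ∑ i ∈ B, f i := by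
    calc (B.card : ℤ) * 4 = ∑ _i ∈ B, (4 : ℤ) := by
          rw [Finset.sum_const, nsmul_eq_mul]
      _ ≤ ∑ i ∈ B, f i := by
          apply Finset.sum_le_sum
          intro i hi
          simp only [hB, Finset.mem_filter] at hi
          simp only [hf, hi.2]
          split <;> norm_num
  have hCbound : (C.card : ℤ) * 1 ≤ ∑ i ∈ C, f i := by
    calc (C.card : ℤ) * 1 = ∑ _i ∈ C, (1 : ℤ) := by
          rw [Finset.sum_const, nsmul_eq_mul]
      _ ≤ ∑ i ∈ C, f i := by
          apply Finset.sum_le_sum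
          intro i hi
          simp only [hC, Finset.mem_filter] at hi
          simp only [hf, hi.2]
          split <;> norm_num
  have hCcard : (C.card : ℤ) = (n : ℤ) - 3 := by
    rw [h3]; push_cast [Nat.cast_sub (by omega : 3 ≤ n)]; ring
  rw [hsplit]
  rw [h1] at hAbound
  rw [h2] at hBbound
  rw [hCcard] at hCbound
  push_cast at hAbound hBbound
  nlinarith [hAbound, hBbound, hCbound]
end
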